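/- arXiv:2311.15602 — 3 statements merged into one kernel-verified Lean document; each statement's English description precedes it below -/
import Mathlib

section
/- Let N ≥ 1, κ ≥ 0, let ã and B be bilinear forms on ℝ^N with |B(x,y)| ≤ M_B‖x‖‖y‖ for all x, y (M_B ≥ 0), let d ∈ ℝ^N have nonnegative entries defining s(v,w) = Σᵢ dᵢ vᵢ wᵢ, and assume there exists c > 0 such that ã(v⁺ − w⁺, v − w) + s(v⁻ − w⁻, v − w) ≥ c‖v − w‖² for all v, w ∈ ℝ^N, where ‖·‖ is the Euclidean norm. Let f : ℝ^N → ℝ be linear with |f(v)| ≤ F‖v‖ for all v. If ẑ ∈ ℝ^N and z ∈ ℝ^N satisfies ã(z⁺, v) + s(z⁻, v) = f(v) − B(ẑ⁺, v) for all v ∈ ℝ^N, then ‖z‖ ≤ (F + M_B κ √N)/c. In particular, the fixed-point map ẑ ↦ z maps all of ℝ^N into a fixed closed ball. -/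
/-! Testing the coercivity inequality with `v = z` and `w = 0` (note `0⁺ = 0`) and inserting the
equation for `z` tested with `z` gives `c ‖z‖² ≤ f z − B(ẑ⁺, z) ≤ (F + M_B ‖ẑ⁺‖) ‖z‖`. Since
every component of `ẑ⁺` lies in `[0, κ]`, `‖ẑ⁺‖ ≤ κ √N`, whatever `ẑ` is. -/

noncomputable def clipE {N : ℕ} (κ : ℝ) (v : EuclideanSpace ℝ (Fin N)) :
    EuclideanSpace ℝ (Fin N) :=
  WithLp.toLp 2 (fun i => max 0 (min (v i) κ))

lemma EuclideanSpace.norm_le_mul_sqrt_card {𝕜 ι : Type*} [RCLike 𝕜] [Fintype ι]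
    {κ : ℝ} (hκ : 0 ≤ κ) (x : EuclideanSpace 𝕜 ι) (hx : ∀ i, ‖x i‖ ≤ κ) :
    ‖x‖ ≤ κ * √(Fintype.card ι) := by
  calc ‖x‖ = √(∑ i, ‖x i‖ ^ 2) := EuclideanSpace.norm_eq x
    _ ≤ √(∑ _i : ι, κ ^ 2) := by gcongr with i; exact hx i
    _ = κ * √(Fintype.card ι) := by
      rw [Finset.sum_const, Finset.card_univ, nsmul_eq_mul, Real.sqrt_mul' _ (sq_nonneg κ),
        Real.sqrt_sq hκ, mul_comm]

lemma nonneg_of_forall_abs_le_mul_norm {E : Type*} [NormedAddCommGroup E] [Nontrivial E]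
    {g : E → ℝ} {F : ℝ} (hg : ∀ v, |g v| ≤ F * ‖v‖) : 0 ≤ F := by
  obtain ⟨v, hv⟩ := exists_ne (0 : E)
  exact nonneg_of_mul_nonneg_left ((abs_nonneg _).trans (hg v)) (norm_pos_iff.mpr hv)

lemma le_div_of_mul_sq_le_mul {c K x : ℝ} (hc : 0 < c) (hK : 0 ≤ K) (h : c * x ^ 2 ≤ K * x) :
    x ≤ K / c := by
  rw [le_div_iff₀ hc]
  nlinarith

section clipE

variable {N : ℕ} {κ : ℝ}

lemma clipE_zero (hκ : 0 ≤ κ) : clipE κ (0 : EuclideanSpace ℝ (Fin N)) = 0 := by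
  ext i
  simp [clipE, min_eq_left hκ]

lemma clipE_apply_mem_Icc (hκ : 0 ≤ κ) (v : EuclideanSpace ℝ (Fin N)) (i : Fin N) :
    clipE κ v i ∈ Set.Icc 0 κ :=
  ⟨le_max_left _ _, max_le hκ (min_le_right _ _)⟩

lemma norm_clipE_le (hκ : 0 ≤ κ) (v : EuclideanSpace ℝ (Fin N)) :
    ‖clipE κ v‖ ≤ κ * √N := by
  simpa using EuclideanSpace.norm_le_mul_sqrt_card hκ (clipE κ v) fun i => by
    obtain ⟨h0, hκ'⟩ := clipE_apply_mem_Icc hκ v i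
    rwa [Real.norm_of_nonneg h0]

end clipE

theorem fixed_point_map_ball_invariant_general (N : ℕ) (hN : 1 ≤ N) (κ : ℝ) (hκ : 0 ≤ κ)
    (A B : EuclideanSpace ℝ (Fin N) →ₗ[ℝ] EuclideanSpace ℝ (Fin N) →ₗ[ℝ] ℝ)
    (MB : ℝ) (hMB : 0 ≤ MB)
    (hB : ∀ x y : EuclideanSpace ℝ (Fin N), |B x y| ≤ MB * ‖x‖ * ‖y‖)
    (s : EuclideanSpace ℝ (Fin N) → EuclideanSpace ℝ (Fin N) → ℝ)
    (c : ℝ) (hc : 0 < c)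
    (hmono : ∀ v w : EuclideanSpace ℝ (Fin N),
      c * ‖v - w‖ ^ 2 ≤
        A (clipE κ v - clipE κ w) (v - w)
          + s ((v - clipE κ v) - (w - clipE κ w)) (v - w))
    (f : EuclideanSpace ℝ (Fin N) →ₗ[ℝ] ℝ) (F : ℝ)
    (hf : ∀ v : EuclideanSpace ℝ (Fin N), |f v| ≤ F * ‖v‖)
    (zhat z : EuclideanSpace ℝ (Fin N))
    (hz : ∀ v : EuclideanSpace ℝ (Fin N),
      A (clipE κ z) v + s (z - clipE κ z) v = f v - B (clipE κ zhat) v) :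
    ‖z‖ ≤ (F + MB * κ * Real.sqrt N) / c := by
  have : Nonempty (Fin N) := Fin.pos_iff_nonempty.mp hN
  have hF : 0 ≤ F := nonneg_of_forall_abs_le_mul_norm hf
  have energy : c * ‖z‖ ^ 2 ≤ f z - B (clipE κ zhat) z := by
    simpa only [clipE_zero hκ, sub_zero, hz z] using hmono z 0
  refine le_div_of_mul_sq_le_mul hc (by positivity) (energy.trans ?_)
  calc f z - B (clipE κ zhat) z ≤ |f z| + |B (clipE κ zhat) z| := by
        linarith [le_abs_self (f z), neg_abs_le (B (clipE κ zhat) z)]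
    _ ≤ F * ‖z‖ + MB * ‖clipE κ zhat‖ * ‖z‖ := add_le_add (hf z) (hB _ _)
    _ ≤ F * ‖z‖ + MB * (κ * √N) * ‖z‖ := by gcongr; exact norm_clipE_le hκ zhat
    _ = (F + MB * κ * √N) * ‖z‖ := by ring

/-- ball invariance of the fixed-point map: if `z` solves the monotone
clipped problem with right-hand side `f(·) − B(zhat⁺, ·)`, then
`‖z‖ ≤ (F + M_B κ √N)/c`. -/
theorem fixed_point_map_ball_invariant (N : ℕ) (hN : 1 ≤ N) (κ : ℝ) (hκ : 0 ≤ κ)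
    (A B : EuclideanSpace ℝ (Fin N) →ₗ[ℝ] EuclideanSpace ℝ (Fin N) →ₗ[ℝ] ℝ)
    (MB : ℝ) (hMB : 0 ≤ MB)
    (hB : ∀ x y : EuclideanSpace ℝ (Fin N), |B x y| ≤ MB * ‖x‖ * ‖y‖)
    (d : Fin N → ℝ) (hd : ∀ i, 0 ≤ d i)
    (s : EuclideanSpace ℝ (Fin N) → EuclideanSpace ℝ (Fin N) → ℝ)
    (hs : ∀ v w : EuclideanSpace ℝ (Fin N), s v w = ∑ i, d i * v i * w i)
    (c : ℝ) (hc : 0 < c)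
    (hmono : ∀ v w : EuclideanSpace ℝ (Fin N),
      c * ‖v - w‖ ^ 2 ≤
        A (clipE κ v - clipE κ w) (v - w)
          + s ((v - clipE κ v) - (w - clipE κ w)) (v - w))
    (f : EuclideanSpace ℝ (Fin N) →ₗ[ℝ] ℝ) (F : ℝ)
    (hf : ∀ v : EuclideanSpace ℝ (Fin N), |f v| ≤ F * ‖v‖)
    (zhat z : EuclideanSpace ℝ (Fin N))
    (hz : ∀ v : EuclideanSpace ℝ (Fin N),
      A (clipE κ z) v + s (z - clipE κ z) v = f v - B (clipE κ zhat) v) :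
    ‖z‖ ≤ (F + MB * κ * Real.sqrt N) / c :=
  fixed_point_map_ball_invariant_general N hN κ hκ A B MB hMB hB s c hc hmono f F hf zhat z hz
end

section
/- Let N ≥ 1, κ ≥ 0, let a be a bilinear form on ℝ^N satisfying a(v,v) ≥ c₀‖v‖² for all v, with c₀ > 0 and ‖·‖ the Euclidean norm, let d ∈ ℝ^N have strictly positive entries defining s(v,w) = Σᵢ dᵢ vᵢ wᵢ, and let f : ℝ^N → ℝ be linear. If u₁, u₂ ∈ ℝ^N both satisfy a(uⱼ⁺, v) + s(uⱼ⁻, v) = f(v) for all v ∈ ℝ^N (j = 1, 2), then u₁ = u₂. -/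
open scoped BigOperators

theorem eq_of_forall_apply_proj_add_apply_sub_proj {E : Type*} [AddCommGroup E] [Module ℝ E]
    (a b : E →ₗ[ℝ] E →ₗ[ℝ] ℝ) (ha : ∀ x, a x x ≤ 0 → x = 0) (hb : ∀ x, b x x ≤ 0 → x = 0)
    (P : E → E) (f : E → ℝ) {u₁ u₂ : E}
    (hP : 0 ≤ b ((u₁ - P u₁) - (u₂ - P u₂)) (P u₁ - P u₂))
    (hu₁ : ∀ v, a (P u₁) v + b (u₁ - P u₁) v = f v)
    (hu₂ : ∀ v, a (P u₂) v + b (u₂ - P u₂) v = f v) :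
    u₁ = u₂ := by
  set p := P u₁ - P u₂
  set m := (u₁ - P u₁) - (u₂ - P u₂)
  have hdiff : ∀ v, a p v + b m v = 0 := fun v => by
    rw [LinearMap.map_sub₂, LinearMap.map_sub₂]
    linarith [hu₁ v, hu₂ v]
  have hp : p = 0 := ha p (by linarith [hdiff p])
  have hm : m = 0 := hb m (by linarith [hdiff m, show a p m = 0 by simp [hp]])
  calc u₁ = u₂ + (p + m) := by simp only [p, m]; abel
    _ = u₂ := by rw [hp, hm, add_zero, add_zero]

theorem eq_zero_of_coercive {E : Type*} [NormedAddCommGroup E] [Module ℝ E]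
    (a : E →ₗ[ℝ] E →ₗ[ℝ] ℝ) {c₀ : ℝ} (hc₀ : 0 < c₀) (hcoer : ∀ v, c₀ * ‖v‖ ^ 2 ≤ a v v)
    {x : E} (hx : a x x ≤ 0) : x = 0 := by
  have : ‖x‖ ^ 2 ≤ 0 := by nlinarith [hcoer x]
  exact norm_eq_zero.mp (pow_eq_zero_iff two_ne_zero |>.mp (le_antisymm this (sq_nonneg _)))

theorem monotone_clip (κ : ℝ) : Monotone fun x : ℝ => max 0 (min x κ) :=
  monotone_const.max (monotone_id.min monotone_const)

theorem monotone_sub_clip (κ : ℝ) : Monotone fun x : ℝ => x - max 0 (min x κ) := by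
  have h : (fun x : ℝ => x - max 0 (min x κ)) = fun x => min x (max 0 (x - κ)) := by
    funext x; grind
  rw [h]
  exact monotone_id.min (monotone_const.max fun _ _ hxy => sub_le_sub_right hxy κ)

section DiagonalForm

variable {N : ℕ} (d : Fin N → ℝ)

noncomputable def diagForm :
    EuclideanSpace ℝ (Fin N) →ₗ[ℝ] EuclideanSpace ℝ (Fin N) →ₗ[ℝ] ℝ :=
  LinearMap.mk₂ ℝ (fun v w => ∑ i, d i * v i * w i)
    (fun _ _ _ => by
      simp only [PiLp.add_apply, ← Finset.sum_add_distrib]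
      exact Finset.sum_congr rfl fun _ _ => by ring)
    (fun _ _ _ => by
      simp only [PiLp.smul_apply, smul_eq_mul, Finset.mul_sum]
      exact Finset.sum_congr rfl fun _ _ => by ring)
    (fun _ _ _ => by
      simp only [PiLp.add_apply, ← Finset.sum_add_distrib]
      exact Finset.sum_congr rfl fun _ _ => by ring)
    (fun _ _ _ => by
      simp only [PiLp.smul_apply, smul_eq_mul, Finset.mul_sum]
      exact Finset.sum_congr rfl fun _ _ => by ring)

@[simp]
theorem diagForm_apply (v w : EuclideanSpace ℝ (Fin N)) :
    diagForm d v w = ∑ i, d i * v i * w i :=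
  rfl

theorem eq_zero_of_diagForm_self_nonpos (hd : ∀ i, 0 < d i) {x : EuclideanSpace ℝ (Fin N)}
    (hx : diagForm d x x ≤ 0) : x = 0 := by
  have hterm : ∀ i ∈ Finset.univ, 0 ≤ d i * x i * x i := fun i _ => by
    rw [mul_assoc]; exact mul_nonneg (hd i).le (mul_self_nonneg _)
  have hsum := (Finset.sum_eq_zero_iff_of_nonneg hterm).mp
    (le_antisymm hx (Finset.sum_nonneg hterm))
  ext i
  simpa [mul_assoc, (hd i).ne'] using hsum i (Finset.mem_univ i)

theorem diagForm_sub_clipE_clipE_nonneg (hd : ∀ i, 0 ≤ d i) (κ : ℝ)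
    (u₁ u₂ : EuclideanSpace ℝ (Fin N)) :
    0 ≤ diagForm d ((u₁ - clipE κ u₁) - (u₂ - clipE κ u₂)) (clipE κ u₁ - clipE κ u₂) := by
  rw [diagForm_apply]
  refine Finset.sum_nonneg fun i _ => ?_
  rw [mul_assoc]
  refine mul_nonneg (hd i) ?_
  simpa [clipE] using
    ((monotone_sub_clip κ).monovary (monotone_clip κ)).sub_mul_sub_nonneg (u₂ i) (u₁ i)

end DiagonalForm

theorem bpm_uniqueness_general (N : ℕ) (κ : ℝ)
    (a : EuclideanSpace ℝ (Fin N) →ₗ[ℝ] EuclideanSpace ℝ (Fin N) →ₗ[ℝ] ℝ)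
    (c₀ : ℝ) (hc₀ : 0 < c₀)
    (hcoer : ∀ v : EuclideanSpace ℝ (Fin N), c₀ * ‖v‖ ^ 2 ≤ a v v)
    (d : Fin N → ℝ) (hd : ∀ i, 0 < d i)
    (s : EuclideanSpace ℝ (Fin N) → EuclideanSpace ℝ (Fin N) → ℝ)
    (hs : ∀ v w : EuclideanSpace ℝ (Fin N), s v w = ∑ i, d i * v i * w i)
    (f : EuclideanSpace ℝ (Fin N) →ₗ[ℝ] ℝ)
    (u₁ u₂ : EuclideanSpace ℝ (Fin N))
    (hu₁ : ∀ v : EuclideanSpace ℝ (Fin N),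
      a (clipE κ u₁) v + s (u₁ - clipE κ u₁) v = f v)
    (hu₂ : ∀ v : EuclideanSpace ℝ (Fin N),
      a (clipE κ u₂) v + s (u₂ - clipE κ u₂) v = f v) :
    u₁ = u₂ := by
  obtain rfl : s = fun v w => diagForm d v w := by
    funext v w; exact hs v w
  exact eq_of_forall_apply_proj_add_apply_sub_proj a (diagForm d)
    (fun _ => eq_zero_of_coercive a hc₀ hcoer) (fun _ => eq_zero_of_diagForm_self_nonpos d hd)
    (clipE κ) f (diagForm_sub_clipE_clipE_nonneg d (fun i => (hd i).le) κ u₁ u₂) hu₁ hu₂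

/-- uniqueness for the bound-preserving method: if `a` is coercive and
the diagonal weights of `s` are strictly positive, then two solutions of
`a(u⁺, v) + s(u⁻, v) = f(v)` coincide. -/
theorem bpm_uniqueness (N : ℕ) (hN : 1 ≤ N) (κ : ℝ) (hκ : 0 ≤ κ)
    (a : EuclideanSpace ℝ (Fin N) →ₗ[ℝ] EuclideanSpace ℝ (Fin N) →ₗ[ℝ] ℝ)
    (c₀ : ℝ) (hc₀ : 0 < c₀)
    (hcoer : ∀ v : EuclideanSpace ℝ (Fin N), c₀ * ‖v‖ ^ 2 ≤ a v v)
    (d : Fin N → ℝ) (hd : ∀ i, 0 < d i)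
    (s : EuclideanSpace ℝ (Fin N) → EuclideanSpace ℝ (Fin N) → ℝ)
    (hs : ∀ v w : EuclideanSpace ℝ (Fin N), s v w = ∑ i, d i * v i * w i)
    (f : EuclideanSpace ℝ (Fin N) →ₗ[ℝ] ℝ)
    (u₁ u₂ : EuclideanSpace ℝ (Fin N))
    (hu₁ : ∀ v : EuclideanSpace ℝ (Fin N),
      a (clipE κ u₁) v + s (u₁ - clipE κ u₁) v = f v)
    (hu₂ : ∀ v : EuclideanSpace ℝ (Fin N),
      a (clipE κ u₂) v + s (u₂ - clipE κ u₂) v = f v) :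
    u₁ = u₂ :=
  bpm_uniqueness_general N κ a c₀ hc₀ hcoer d hd s hs f u₁ u₂ hu₁ hu₂
end

section
/- Let N ≥ 1, κ ≥ 0, let ã and B be bilinear forms on ℝ^N, let d ∈ ℝ^N have strictly positive entries defining s(v,w) = Σᵢ dᵢ vᵢ wᵢ, and let ‖·‖ be the Euclidean norm. Assume: (i) there exists c > 0 such that ã(v⁺ − w⁺, v − w) + s(v⁻ − w⁻, v − w) ≥ c‖v − w‖² for all v, w ∈ ℝ^N; and (ii) the combined form a := ã + B is coercive, i.e., there exists c₀ > 0 with ã(v,v) + B(v,v) ≥ c₀‖v‖² for all v. Then for every linear functional f : ℝ^N → ℝ there exists a unique u ∈ ℝ^N such that ã(u⁺, v) + B(u⁺, v) + s(u⁻, v) = f(v) for all v ∈ ℝ^N. -/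
open scoped RealInnerProductSpace NNReal

def clip (κ a : ℝ) : ℝ := max 0 (min a κ)

theorem lipschitzWith_clip (κ : ℝ) : LipschitzWith 1 (clip κ) :=
  (LipschitzWith.id.min_const κ).const_max 0

theorem sub_clip_sub_mul_clip_sub_nonneg {κ : ℝ} (hκ : 0 ≤ κ) (a b : ℝ) :
    0 ≤ (a - clip κ a - (b - clip κ b)) * (clip κ a - clip κ b) := by
  simp only [clip, max_def, min_def]
  split_ifs <;> nlinarith

theorem clip_sub_mul_eq_of_clip_sub_mul_eq {κ ρ δ y t : ℝ} (hκ : 0 ≤ κ) (hρ : 0 < ρ)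
    (hδ : 0 < δ) (h : clip κ (y - ρ * t) = y) : clip κ (y - δ * t) = y := by
  simp only [clip, max_def, min_def] at h ⊢
  split_ifs at h ⊢ <;> nlinarith

section Coercive

variable {E : Type*} [NormedAddCommGroup E] [InnerProductSpace ℝ E]

theorem exists_norm_sub_smul_le_of_coercive (T : E →L[ℝ] E) {c₀ : ℝ} (hc₀ : 0 < c₀)
    (hT : ∀ x, c₀ * ‖x‖ ^ 2 ≤ ⟪T x, x⟫) :
    ∃ ρ : ℝ, 0 < ρ ∧ ∃ K : ℝ≥0, K < 1 ∧ ∀ x, ‖x - ρ • T x‖ ≤ K * ‖x‖ := by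
  -- `ρ = c₀ / L²` with `L ≥ max ‖T‖ c₀` gives `‖x - ρ • T x‖² ≤ (1 - (c₀ / L)²) ‖x‖²`.
  set L := ‖T‖ + c₀
  have hL : 0 < L := by positivity
  set r := c₀ / L
  have hr : 0 < r := by positivity
  have hr1 : r ≤ 1 := (div_le_one hL).2 (by simp [L])
  refine ⟨r / L, by positivity, (√(1 - r ^ 2)).toNNReal, ?_, fun x => ?_⟩
  · rw [Real.toNNReal_lt_one, Real.sqrt_lt' one_pos]
    nlinarith
  have hTx : ‖T x‖ ≤ L * ‖x‖ := (T.le_opNorm x).trans (by gcongr; simp [L, hc₀.le])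
  have hsq : ‖x - (r / L) • T x‖ ^ 2 ≤ (1 - r ^ 2) * ‖x‖ ^ 2 :=
    calc ‖x - (r / L) • T x‖ ^ 2
        = ‖x‖ ^ 2 - 2 * (r / L) * ⟪T x, x⟫ + (r / L) ^ 2 * ‖T x‖ ^ 2 := by
          rw [norm_sub_sq_real, real_inner_smul_right, norm_smul,
            Real.norm_of_nonneg (by positivity), real_inner_comm]
          ring
      _ ≤ ‖x‖ ^ 2 - 2 * (r / L) * (c₀ * ‖x‖ ^ 2) + (r / L) ^ 2 * (L * ‖x‖) ^ 2 := by
          gcongr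
          exact hT x
      _ = (1 - r ^ 2) * ‖x‖ ^ 2 := by simp only [r]; field_simp; ring
  rw [Real.coe_toNNReal _ (Real.sqrt_nonneg _), ← Real.sqrt_sq (norm_nonneg (x - _)),
    ← Real.sqrt_sq (norm_nonneg x), ← Real.sqrt_mul (by nlinarith)]
  exact Real.sqrt_le_sqrt hsq

theorem exists_fixedPoint_comp_sub_smul [CompleteSpace E] {P : E → E} (hP : LipschitzWith 1 P)
    (T : E →L[ℝ] E) {c₀ : ℝ} (hc₀ : 0 < c₀) (hT : ∀ x, c₀ * ‖x‖ ^ 2 ≤ ⟪T x, x⟫) (F : E) :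
    ∃ ρ : ℝ, 0 < ρ ∧ ∃ y, P (y - ρ • (T y - F)) = y := by
  obtain ⟨ρ, hρ, K, hK, hcontr⟩ := exists_norm_sub_smul_le_of_coercive T hc₀ hT
  have hstep : LipschitzWith K fun y => y - ρ • (T y - F) := by
    refine LipschitzWith.of_dist_le_mul fun x y => ?_
    rw [dist_eq_norm, dist_eq_norm,
      show x - ρ • (T x - F) - (y - ρ • (T y - F)) = x - y - ρ • T (x - y) by
        rw [map_sub]; module]
    exact hcontr (x - y)
  have hmap : ContractingWith K (P ∘ fun y => y - ρ • (T y - F)) :=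
    ⟨hK, by simpa using hP.comp hstep⟩
  obtain ⟨y, hy, -⟩ := hmap.exists_fixedPoint 0 (edist_ne_top _ _)
  exact ⟨ρ, hρ, y, hy⟩

end Coercive

section Clipped

variable {N : ℕ} {κ c₀ : ℝ} {d : Fin N → ℝ}

@[simp]
theorem clipE_apply (κ : ℝ) (v : EuclideanSpace ℝ (Fin N)) (i : Fin N) :
    clipE κ v i = clip κ (v i) := rfl

theorem lipschitzWith_clipE (κ : ℝ) : LipschitzWith 1 (clipE (N := N) κ) := by
  refine LipschitzWith.of_dist_le_mul fun v w => ?_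
  simp only [NNReal.coe_one, one_mul, EuclideanSpace.dist_eq, clipE_apply]
  gcongr with i
  simpa using (lipschitzWith_clip κ).dist_le_mul (v i) (w i)

def IsClippedSolution (κ : ℝ)
    (a : EuclideanSpace ℝ (Fin N) →ₗ[ℝ] EuclideanSpace ℝ (Fin N) →ₗ[ℝ] ℝ) (d : Fin N → ℝ)
    (f : EuclideanSpace ℝ (Fin N) →ₗ[ℝ] ℝ) (u : EuclideanSpace ℝ (Fin N)) : Prop :=
  ∀ v, a (clipE κ u) v + ∑ i, d i * (u - clipE κ u) i * v i = f v

theorem exists_isClippedSolution (hκ : 0 ≤ κ)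
    (a : EuclideanSpace ℝ (Fin N) →ₗ[ℝ] EuclideanSpace ℝ (Fin N) →ₗ[ℝ] ℝ) (hc₀ : 0 < c₀)
    (ha : ∀ v, c₀ * ‖v‖ ^ 2 ≤ a v v) (hd : ∀ i, 0 < d i)
    (f : EuclideanSpace ℝ (Fin N) →ₗ[ℝ] ℝ) :
    ∃ u, IsClippedSolution κ a d f u := by
  set T := InnerProductSpace.continuousLinearMapOfBilin (𝕜 := ℝ) a.toContinuousBilinearMap
  have hT (x v) : ⟪T x, v⟫ = a x v := InnerProductSpace.continuousLinearMapOfBilin_apply _ x v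
  set F := (InnerProductSpace.toDual ℝ _).symm (LinearMap.toContinuousLinearMap f)
  have hF (v) : ⟪F, v⟫ = f v := by simp [F]
  obtain ⟨ρ, hρ, y, hy⟩ := exists_fixedPoint_comp_sub_smul (lipschitzWith_clipE κ) T hc₀
    (fun x => hT x x ▸ ha x) F
  set r := T y - F
  set u : EuclideanSpace ℝ (Fin N) := WithLp.toLp 2 fun i => y i - (d i)⁻¹ * r i
  have hclip : clipE κ u = y := by
    ext i
    have hyi : clip κ (y i - ρ * r i) = y i := by simpa using congr($hy i)
    exact clip_sub_mul_eq_of_clip_sub_mul_eq hκ hρ (inv_pos.2 (hd i)) hyi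
  refine ⟨u, fun v => ?_⟩
  have hsum : ∑ i, d i * (u - y) i * v i = -⟪r, v⟫ := by
    simp only [PiLp.inner_apply, ← Finset.sum_neg_distrib]
    refine Finset.sum_congr rfl fun i _ => ?_
    simp [u, (hd i).ne', mul_comm]
  rw [hclip, hsum, ← hT, ← hF, inner_sub_left]
  ring

theorem IsClippedSolution.unique (hκ : 0 ≤ κ)
    {a : EuclideanSpace ℝ (Fin N) →ₗ[ℝ] EuclideanSpace ℝ (Fin N) →ₗ[ℝ] ℝ} (hc₀ : 0 < c₀)
    (ha : ∀ v, c₀ * ‖v‖ ^ 2 ≤ a v v) (hd : ∀ i, 0 < d i)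
    {f : EuclideanSpace ℝ (Fin N) →ₗ[ℝ] ℝ} {u₁ u₂ : EuclideanSpace ℝ (Fin N)}
    (h₁ : IsClippedSolution κ a d f u₁) (h₂ : IsClippedSolution κ a d f u₂) :
    u₁ = u₂ := by
  set w := clipE κ u₁ - clipE κ u₂
  have hsign : 0 ≤ ∑ i, d i * ((u₁ - clipE κ u₁) i - (u₂ - clipE κ u₂) i) * w i := by
    refine Finset.sum_nonneg fun i _ => ?_
    rw [mul_assoc]
    exact mul_nonneg (hd i).le
      (by simpa [w] using sub_clip_sub_mul_clip_sub_nonneg hκ (u₁ i) (u₂ i))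
  have hsplit : ∑ i, d i * ((u₁ - clipE κ u₁) i - (u₂ - clipE κ u₂) i) * w i =
      ∑ i, d i * (u₁ - clipE κ u₁) i * w i - ∑ i, d i * (u₂ - clipE κ u₂) i * w i := by
    rw [← Finset.sum_sub_distrib]
    exact Finset.sum_congr rfl fun i _ => by ring
  have haw : a w w = a (clipE κ u₁) w - a (clipE κ u₂) w := LinearMap.map_sub₂ a _ _ w
  have hw : c₀ * ‖w‖ ^ 2 ≤ 0 := by linarith [ha w, h₁ w, h₂ w]
  have hclip : clipE κ u₁ = clipE κ u₂ :=
    sub_eq_zero.1 (by simpa using nonpos_of_mul_nonpos_right hw hc₀)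
  ext i
  simpa [hclip, (hd i).ne'] using (h₁ _).trans (h₂ (EuclideanSpace.single i 1)).symm

end Clipped

theorem bpm_wellposed_general (N : ℕ) (κ : ℝ) (hκ : 0 ≤ κ)
    (A B : EuclideanSpace ℝ (Fin N) →ₗ[ℝ] EuclideanSpace ℝ (Fin N) →ₗ[ℝ] ℝ)
    (d : Fin N → ℝ) (hd : ∀ i, 0 < d i)
    (s : EuclideanSpace ℝ (Fin N) → EuclideanSpace ℝ (Fin N) → ℝ)
    (hs : ∀ v w : EuclideanSpace ℝ (Fin N), s v w = ∑ i, d i * v i * w i)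
    (c₀ : ℝ) (hc₀ : 0 < c₀)
    (hcoer : ∀ v : EuclideanSpace ℝ (Fin N), c₀ * ‖v‖ ^ 2 ≤ A v v + B v v) :
    ∀ f : EuclideanSpace ℝ (Fin N) →ₗ[ℝ] ℝ,
      ∃! u : EuclideanSpace ℝ (Fin N),
        ∀ v : EuclideanSpace ℝ (Fin N),
          A (clipE κ u) v + B (clipE κ u) v + s (u - clipE κ u) v = f v := by
  intro f
  have hcoer' : ∀ v, c₀ * ‖v‖ ^ 2 ≤ (A + B) v v := hcoer
  have hsolution (u) : (∀ v, A (clipE κ u) v + B (clipE κ u) v + s (u - clipE κ u) v = f v) ↔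
      IsClippedSolution κ (A + B) d f u := by
    simp only [IsClippedSolution, hs, LinearMap.add_apply]
  simp only [hsolution]
  obtain ⟨u, hu⟩ := exists_isClippedSolution hκ (A + B) hc₀ hcoer' hd f
  exact ⟨u, hu, fun u' hu' => hu'.unique hκ hc₀ hcoer' hd hu⟩

/-- combined well-posedness of the bound-preserving method: under strong
monotonicity of the convection-free clipped operator and coercivity of `ã + B`, for every
linear functional `f` there is a unique `u` with
`ã(u⁺, v) + B(u⁺, v) + s(u⁻, v) = f(v)` for all `v`. -/
theorem bpm_wellposed (N : ℕ) (hN : 1 ≤ N) (κ : ℝ) (hκ : 0 ≤ κ)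
    (A B : EuclideanSpace ℝ (Fin N) →ₗ[ℝ] EuclideanSpace ℝ (Fin N) →ₗ[ℝ] ℝ)
    (d : Fin N → ℝ) (hd : ∀ i, 0 < d i)
    (s : EuclideanSpace ℝ (Fin N) → EuclideanSpace ℝ (Fin N) → ℝ)
    (hs : ∀ v w : EuclideanSpace ℝ (Fin N), s v w = ∑ i, d i * v i * w i)
    (c : ℝ) (hc : 0 < c)
    (hmono : ∀ v w : EuclideanSpace ℝ (Fin N),
      c * ‖v - w‖ ^ 2 ≤
        A (clipE κ v - clipE κ w) (v - w)
          + s ((v - clipE κ v) - (w - clipE κ w)) (v - w))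
    (c₀ : ℝ) (hc₀ : 0 < c₀)
    (hcoer : ∀ v : EuclideanSpace ℝ (Fin N), c₀ * ‖v‖ ^ 2 ≤ A v v + B v v) :
    ∀ f : EuclideanSpace ℝ (Fin N) →ₗ[ℝ] ℝ,
      ∃! u : EuclideanSpace ℝ (Fin N),
        ∀ v : EuclideanSpace ℝ (Fin N),
          A (clipE κ u) v + B (clipE κ u) v + s (u - clipE κ u) v = f v :=
  bpm_wellposed_general N κ hκ A B d hd s hs c₀ hc₀ hcoer
end
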